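/- Let a ∈ C([0,1]) be strongly degenerate with degeneracy point x₀ ∈ (0,1). Let u ∈ H¹(0,1) be such that u' is locally absolutely continuous on [0,1] \ {x₀}, √a·u'' ∈ L²(0,1) and a·u'' ∈ H²(0,1), and let v ∈ H¹(0,1) be such that v' is locally absolutely continuous on [0,1] \ {x₀} and √a·v'' ∈ L²(0,1). Then ∫₀¹ (a u'')'' v dx = (a u'')'(1) v(1) − (a u'')'(0) v(0) − (a u'')(1) v'(1) + (a u'')(0) v'(0) + ∫₀¹ a u'' v'' dx. -/

import Mathlib

open MeasureTheory Set Filter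

/-- `f` is absolutely continuous on `[c,d]` with (a.e.) derivative `g`,
expressed via the fundamental theorem of calculus. -/
def ACOn (c d : ℝ) (f g : ℝ → ℝ) : Prop :=
  MeasureTheory.IntegrableOn g (Set.Icc c d) ∧
    ∀ x ∈ Set.Icc c d, f x = f c + ∫ t in c..x, g t

/-- `f` is locally absolutely continuous on `[0,1] \ {x₀}` with derivative `g`. -/
def LocACOn (x₀ : ℝ) (f g : ℝ → ℝ) : Prop :=
  ∀ c d : ℝ, 0 ≤ c → d ≤ 1 → c ≤ d → x₀ ∉ Set.Icc c d → ACOn c d f g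

/-- `a` is weakly degenerate with degeneracy point `x₀`. -/
def WeaklyDeg (a : ℝ → ℝ) (x₀ : ℝ) : Prop :=
  ContinuousOn a (Set.Icc 0 1) ∧ x₀ ∈ Set.Icc (0:ℝ) 1 ∧ a x₀ = 0 ∧
    (∀ x ∈ Set.Icc (0:ℝ) 1, x ≠ x₀ → 0 < a x) ∧
    MeasureTheory.IntegrableOn (fun x => 1 / a x) (Set.Ioo 0 1)

/-- `a` is strongly degenerate with degeneracy point `x₀`. -/
def StronglyDeg (a : ℝ → ℝ) (x₀ : ℝ) : Prop :=
  ContinuousOn a (Set.Icc 0 1) ∧ x₀ ∈ Set.Icc (0:ℝ) 1 ∧ a x₀ = 0 ∧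
    (∀ x ∈ Set.Icc (0:ℝ) 1, x ≠ x₀ → 0 < a x) ∧
    ¬ MeasureTheory.IntegrableOn (fun x => 1 / a x) (Set.Ioo 0 1)

/-- Hypothesis (H): there is `K ∈ [1,2)` such that `x ↦ |x-x₀|^K / a x` is
non-increasing on `[0,x₀)` and non-decreasing on `(x₀,1]`. -/
def HypH (a : ℝ → ℝ) (x₀ : ℝ) : Prop :=
  ∃ K : ℝ, 1 ≤ K ∧ K < 2 ∧
    AntitoneOn (fun x => |x - x₀| ^ K / a x) (Set.Ico 0 x₀) ∧
    MonotoneOn (fun x => |x - x₀| ^ K / a x) (Set.Ioc x₀ 1)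

/-- The squared `L²(0,1)` norm. -/
noncomputable def sqL2 (f : ℝ → ℝ) : ℝ := ∫ x in Set.Ioo (0:ℝ) 1, (f x) ^ 2

/-!
Both terms are integrated by parts. For `∫ (a u'')'' v` this is integration by parts between
absolutely continuous functions on `[0,1]`. For `∫ (a u'')' v'` it only works on either side of
`x₀`, because `v'` is absolutely continuous merely away from `x₀`; on `[0, x]` and `[x, 1]` it
produces the boundary term `(a u'') v'` at `x`, which therefore has one-sided limits at `x₀`.
These limits vanish: `a u''` vanishes at `x₀` (it is a pointwise product and `a x₀ = 0`) and is
Lipschitz, so a nonzero limit would force `|v'| ≳ 1 / |x - x₀|` near `x₀`, contradicting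
`v' ∈ L¹`.
-/

open Topology

namespace ACOn

variable {c d : ℝ} {f g : ℝ → ℝ}

theorem intervalIntegrable (h : ACOn c d f g) {x y : ℝ} (hx : x ∈ Icc c d) (hy : y ∈ Icc c d) :
    IntervalIntegrable g volume x y :=
  (h.1.mono_set (uIcc_subset_Icc hx hy)).intervalIntegrable

theorem sub_eq_integral (h : ACOn c d f g) {x y : ℝ} (hx : x ∈ Icc c d) (hy : y ∈ Icc c d) :
    f y - f x = ∫ t in x..y, g t := by
  rw [h.2 y hy, h.2 x hx, ← intervalIntegral.integral_interval_sub_left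
    (h.intervalIntegrable (left_mem_Icc.2 (hx.1.trans hx.2)) hy)
    (h.intervalIntegrable (left_mem_Icc.2 (hx.1.trans hx.2)) hx)]
  ring

theorem mono (h : ACOn c d f g) {c' d' : ℝ} (hc : c ≤ c') (hcd : c' ≤ d') (hd : d' ≤ d) :
    ACOn c' d' f g := by
  refine ⟨h.1.mono_set (Icc_subset_Icc hc hd), fun x hx => ?_⟩
  have hsub : Icc c' d' ⊆ Icc c d := Icc_subset_Icc hc hd
  rw [← h.sub_eq_integral (hsub (left_mem_Icc.2 hcd)) (hsub hx)]
  ring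

theorem continuousOn (h : ACOn c d f g) : ContinuousOn f (Icc c d) := by
  intro x hx
  have hc : c ∈ Icc c d := left_mem_Icc.2 (hx.1.trans hx.2)
  have hprim := intervalIntegral.continuousOn_primitive_interval' (h.intervalIntegrable hc
    (right_mem_Icc.2 (hx.1.trans hx.2))) left_mem_uIcc
  rw [uIcc_of_le (hx.1.trans hx.2)] at hprim
  exact ((continuousWithinAt_const.add (hprim x hx)).congr (fun y hy => h.2 y hy) (h.2 x hx))

theorem abs_sub_le {M : ℝ} (h : ACOn c d f g) (hg : ∀ x ∈ Icc c d, ‖g x‖ ≤ M) {x y : ℝ}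
    (hx : x ∈ Icc c d) (hy : y ∈ Icc c d) : |f y - f x| ≤ M * |y - x| := by
  rw [h.sub_eq_integral hx hy, ← Real.norm_eq_abs]
  refine intervalIntegral.norm_integral_le_of_norm_le_const fun t ht => hg t ?_
  exact uIcc_subset_Icc hx hy (uIoc_subset_uIcc ht)

theorem absolutelyContinuousOnInterval (h : ACOn c d f g) (hcd : c ≤ d) :
    AbsolutelyContinuousOnInterval f c d := by
  have hprim := (h.intervalIntegrable (left_mem_Icc.2 hcd) (right_mem_Icc.2 hcd))
    |>.absolutelyContinuousOnInterval_intervalIntegral left_mem_uIcc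
  rw [absolutelyContinuousOnInterval_iff] at hprim ⊢
  intro ε hε
  obtain ⟨δ, hδ, hprim⟩ := hprim ε hε
  refine ⟨δ, hδ, fun E hE hsum =>
    (Finset.sum_congr rfl fun i hi => ?_).trans_lt (hprim E hE hsum)⟩
  obtain ⟨hx, hy⟩ := hE.1 i hi
  rw [uIcc_of_le hcd] at hx hy
  rw [h.2 _ hx, h.2 _ hy, dist_add_left]

theorem ae_hasDerivAt (h : ACOn c d f g) (hcd : c ≤ d) :
    ∀ᵐ x, x ∈ Ioo c d → HasDerivAt f (g x) x := by
  have hg := h.intervalIntegrable (left_mem_Icc.2 hcd) (right_mem_Icc.2 hcd)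
  filter_upwards [hg.ae_hasDerivAt_integral] with x hx hxI
  have hprim := (hx (Icc_subset_uIcc (Ioo_subset_Icc_self hxI)) c left_mem_uIcc).const_add (f c)
  exact hprim.congr_of_eventuallyEq (eventually_of_mem (Ioo_mem_nhds hxI.1 hxI.2)
    fun y hy => h.2 y (Ioo_subset_Icc_self hy))

variable {F G : ℝ → ℝ}

theorem integral_deriv_mul_eq_sub (hcd : c ≤ d) (hF : ACOn c d F f) (hG : ACOn c d G g) :
    ∫ x in c..d, (f x * G x + F x * g x) = F d * G d - F c * G c := by
  rw [← (hF.absolutelyContinuousOnInterval hcd).integral_deriv_mul_eq_sub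
    (hG.absolutelyContinuousOnInterval hcd)]
  refine intervalIntegral.integral_congr_ae ?_
  have hd : ∀ᵐ x : ℝ, x ≠ d := by simp [ae_iff, measure_singleton]
  filter_upwards [hF.ae_hasDerivAt hcd, hG.ae_hasDerivAt hcd, hd] with x hFx hGx hxd hx
  rw [uIoc_of_le hcd] at hx
  have hx' : x ∈ Ioo c d := ⟨hx.1, lt_of_le_of_ne hx.2 hxd⟩
  rw [(hFx hx').deriv, (hGx hx').deriv]

theorem integral_mul_deriv_eq_deriv_mul (hcd : c ≤ d) (hF : ACOn c d F f) (hG : ACOn c d G g) :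
    ∫ x in c..d, F x * g x = F d * G d - F c * G c - ∫ x in c..d, f x * G x := by
  have hc := left_mem_Icc.2 hcd
  have hd := right_mem_Icc.2 hcd
  have hGc : ContinuousOn G (uIcc c d) := uIcc_of_le hcd ▸ hG.continuousOn
  have hFc : ContinuousOn F (uIcc c d) := uIcc_of_le hcd ▸ hF.continuousOn
  rw [← integral_deriv_mul_eq_sub hcd hF hG, intervalIntegral.integral_add
    ((hF.intervalIntegrable hc hd).mul_continuousOn hGc)
    ((hG.intervalIntegrable hc hd).continuousOn_mul hFc)]
  ring

theorem tendsto_mul_nhdsLT {x₀ : ℝ} (hcx : c < x₀) (hF : ACOn c x₀ F f)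
    (hG : ∀ y ∈ Ico c x₀, ACOn c y G g)
    (hint : IntegrableOn (fun x => f x * G x + F x * g x) (Icc c x₀)) :
    Tendsto (fun x => F x * G x) (𝓝[<] x₀)
      (𝓝 (F c * G c + ∫ x in c..x₀, (f x * G x + F x * g x))) := by
  have hprim := intervalIntegral.continuousOn_primitive_interval (uIcc_of_le hcx.le ▸ hint)
  rw [uIcc_of_le hcx.le] at hprim
  refine (((hprim x₀ (right_mem_Icc.2 hcx.le)).mono_of_mem_nhdsWithin
    (Icc_mem_nhdsLT hcx)).tendsto.const_add _).congr' ?_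
  filter_upwards [Ico_mem_nhdsLT hcx] with y hy
  rw [integral_deriv_mul_eq_sub hy.1 (hF.mono le_rfl hy.1 hy.2.le) (hG y hy)]
  ring

theorem tendsto_mul_nhdsGT {x₀ : ℝ} (hxd : x₀ < d) (hF : ACOn x₀ d F f)
    (hG : ∀ y ∈ Ioc x₀ d, ACOn y d G g)
    (hint : IntegrableOn (fun x => f x * G x + F x * g x) (Icc x₀ d)) :
    Tendsto (fun x => F x * G x) (𝓝[>] x₀)
      (𝓝 (F d * G d - ∫ x in x₀..d, (f x * G x + F x * g x))) := by
  have hprim := intervalIntegral.continuousOn_primitive_interval_left (uIcc_of_le hxd.le ▸ hint)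
  rw [uIcc_of_le hxd.le] at hprim
  refine (((hprim x₀ (left_mem_Icc.2 hxd.le)).mono_of_mem_nhdsWithin
    (Icc_mem_nhdsGT hxd)).tendsto.const_sub _).congr' ?_
  filter_upwards [Ioc_mem_nhdsGT hxd] with y hy
  rw [integral_deriv_mul_eq_sub hy.2 (hF.mono hy.1.le hy.2 le_rfl) (hG y hy)]
  ring

end ACOn

theorem eq_zero_of_tendsto_mul_of_abs_le {l : Filter ℝ} [l.NeBot] [TendstoIxxClass Icc l l]
    {x₀ C L : ℝ} (hl : l ≤ 𝓝[≠] x₀) {F G : ℝ → ℝ} (hF : ∀ᶠ x in l, |F x| ≤ C * |x - x₀|)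
    (hG : IntegrableAtFilter G l) (hFG : Tendsto (fun x => F x * G x) l (𝓝 L)) : L = 0 := by
  by_contra hL
  obtain ⟨s, hs, hGs⟩ := hG
  -- Otherwise `(x - x₀)⁻¹ = O(G)`, the derivative of `log (x - x₀)`, which is unbounded on both
  -- sides of `x₀` since `Real.log` of a negative number is the logarithm of its absolute value.
  have hlog : ∀ᶠ x in l, HasDerivAt (fun x => Real.log (x - x₀)) (x - x₀)⁻¹ x := by
    filter_upwards [hl self_mem_nhdsWithin] with x hx
    simpa using ((hasDerivAt_id x).sub_const x₀).log (sub_ne_zero.2 hx)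
  have hlog_atTop : Tendsto (fun x => ‖Real.log (x - x₀)‖) l atTop := by
    refine tendsto_abs_atBot_atTop.comp (Real.tendsto_log_nhdsNE_zero.comp ?_)
    rw [← sub_self x₀]
    exact (((hasDerivAt_id x₀).sub_const x₀).tendsto_nhdsNE one_ne_zero).mono_left hl
  have hbig : (fun x => (x - x₀)⁻¹) =O[l] G := by
    refine Asymptotics.IsBigO.of_bound (2 * C / |L|) ?_
    filter_upwards [hF, hl self_mem_nhdsWithin,
      hFG.norm.eventually (lt_mem_nhds (half_lt_self (norm_pos_iff.2 hL)))] with x hFx hx hFGx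
    have hx' : 0 < |x - x₀| := abs_pos.2 (sub_ne_zero.2 hx)
    simp only [norm_mul, norm_inv, Real.norm_eq_abs] at hFGx ⊢
    rw [inv_le_iff_one_le_mul₀ hx', div_mul_eq_mul_div, div_mul_eq_mul_div,
      le_div_iff₀ (abs_pos.2 hL)]
    nlinarith [mul_le_mul_of_nonneg_right hFx (abs_nonneg (G x))]
  exact not_integrableOn_of_tendsto_norm_atTop_of_deriv_isBigO_filter l hs
    (hlog.mono fun x hx => hx.differentiableAt) hlog_atTop
    (hbig.congr' (hlog.mono fun x hx => hx.deriv.symm) EventuallyEq.rfl) hGs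

theorem LocACOn.aestronglyMeasurable {x₀ : ℝ} {f g : ℝ → ℝ} (h : LocACOn x₀ f g) :
    AEStronglyMeasurable g (volume.restrict (Ioo 0 1)) := by
  have hloc : LocallyIntegrableOn g (Ioo 0 1 \ {x₀}) := by
    intro x hx
    obtain ⟨ε, hε, hball⟩ :=
      Metric.isOpen_iff.1 (isOpen_Ioo.sdiff isClosed_singleton) x hx
    have hsub : Icc (x - ε / 2) (x + ε / 2) ⊆ Ioo 0 1 \ {x₀} := by
      rw [← Real.closedBall_eq_Icc]
      exact (Metric.closedBall_subset_ball (half_lt_self hε)).trans hball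
    have hleft := hsub (left_mem_Icc.2 (by linarith))
    have hright := hsub (right_mem_Icc.2 (by linarith))
    refine ⟨_, mem_nhdsWithin_of_mem_nhds (Icc_mem_nhds (a := x - ε / 2) (b := x + ε / 2)
      (by linarith) (by linarith)), ?_⟩
    exact (h _ _ hleft.1.1.le hright.1.2.le (by linarith) fun hx₀ => (hsub hx₀).2 rfl).1
  rw [← Measure.restrict_congr_set (sdiff_null_ae_eq_self (measure_singleton x₀))]
  exact hloc.aestronglyMeasurable

theorem integrable_mul_mul_of_integrable_mul_sq {α : Type*} [MeasurableSpace α] {μ : Measure α}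
    {a u v : α → ℝ} (ha : ∀ᵐ x ∂μ, 0 ≤ a x) (hu : Integrable (fun x => a x * u x ^ 2) μ)
    (hv : Integrable (fun x => a x * v x ^ 2) μ)
    (hm : AEStronglyMeasurable (fun x => a x * u x * v x) μ) :
    Integrable (fun x => a x * u x * v x) μ := by
  refine ((hu.add hv).div_const 2).mono' hm ?_
  filter_upwards [ha] with x hx
  simp only [Pi.add_apply, Real.norm_eq_abs, abs_le]
  constructor <;> nlinarith [mul_nonneg hx (sq_nonneg (u x + v x)),
    mul_nonneg hx (sq_nonneg (u x - v x))]

theorem LocACOn.integral_mul_deriv_eq_deriv_mul {x₀ : ℝ} (hx₀ : x₀ ∈ Ioo 0 1)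
    {F f G g : ℝ → ℝ} (hF : ACOn 0 1 F f) (hf : ContinuousOn f (Icc 0 1)) (hFx₀ : F x₀ = 0)
    (hG : IntegrableOn G (Icc 0 1)) (hG' : LocACOn x₀ G g)
    (hFg : IntegrableOn (fun x => F x * g x) (Icc 0 1)) :
    ∫ x in 0..1, F x * g x = F 1 * G 1 - F 0 * G 0 - ∫ x in 0..1, f x * G x := by
  have hx₀I : x₀ ∈ Icc (0:ℝ) 1 := Ioo_subset_Icc_self hx₀
  have hfG : IntegrableOn (fun x => f x * G x) (Icc 0 1) := hG.continuousOn_mul hf isCompact_Icc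
  have hint : ∀ {p q : ℝ}, 0 ≤ p → q ≤ 1 →
      IntegrableOn (fun x => f x * G x + F x * g x) (Icc p q) :=
    fun hp hq => (hfG.add hFg).mono_set (Icc_subset_Icc hp hq)
  obtain ⟨M, hM⟩ := isCompact_Icc.exists_bound_of_continuousOn hf
  have hFlip : ∀ᶠ x in 𝓝 x₀, |F x| ≤ M * |x - x₀| := by
    filter_upwards [Icc_mem_nhds hx₀.1 hx₀.2] with x hx
    simpa [hFx₀] using hF.abs_sub_le hM hx₀I hx
  have hGx₀ : IntegrableAtFilter G (𝓝 x₀) := ⟨_, Icc_mem_nhds hx₀.1 hx₀.2, hG⟩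
  have hleft := (hF.mono le_rfl hx₀.1.le hx₀.2.le).tendsto_mul_nhdsLT hx₀.1
    (fun y hy => hG' 0 y le_rfl (hy.2.le.trans hx₀.2.le) hy.1 fun h => hy.2.not_ge h.2)
    (hint le_rfl hx₀.2.le)
  have hright := (hF.mono hx₀.1.le hx₀.2.le le_rfl).tendsto_mul_nhdsGT hx₀.2
    (fun y hy => hG' y 1 (hx₀.1.trans hy.1).le le_rfl hy.2 fun h => hy.1.not_ge h.1)
    (hint hx₀.1.le le_rfl)
  have h₀ := eq_zero_of_tendsto_mul_of_abs_le (nhdsLT_le_nhdsNE x₀)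
    (hFlip.filter_mono nhdsWithin_le_nhds) (hGx₀.filter_mono nhdsWithin_le_nhds) hleft
  have h₁ := eq_zero_of_tendsto_mul_of_abs_le (nhdsGT_le_nhdsNE x₀)
    (hFlip.filter_mono nhdsWithin_le_nhds) (hGx₀.filter_mono nhdsWithin_le_nhds) hright
  have hsplit := intervalIntegral.integral_add_adjacent_intervals
    ((intervalIntegrable_iff_integrableOn_Icc_of_le hx₀.1.le).2 (hint le_rfl hx₀.2.le))
    ((intervalIntegrable_iff_integrableOn_Icc_of_le hx₀.2.le).2 (hint hx₀.1.le le_rfl))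
  rw [intervalIntegral.integral_add
    ((intervalIntegrable_iff_integrableOn_Icc_of_le zero_le_one).2 hfG)
    ((intervalIntegrable_iff_integrableOn_Icc_of_le zero_le_one).2 hFg)] at hsplit
  linarith

theorem statement10_general (a : ℝ → ℝ) (x₀ : ℝ) (hx₀ : x₀ ∈ Set.Ioo (0:ℝ) 1)
    (ha : StronglyDeg a x₀)
    (u'' w₁ w₂ v v' v'' : ℝ → ℝ)
    -- u ∈ H¹, u' locally absolutely continuous on [0,1] \ {x₀}, √a u'' ∈ L², a u'' ∈ H²
    (hsau : MeasureTheory.IntegrableOn (fun x => a x * (u'' x) ^ 2) (Set.Ioo 0 1))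
    (hau'' : ACOn 0 1 (fun x => a x * u'' x) w₁) (hw₁ : ACOn 0 1 w₁ w₂)
    -- v ∈ H¹, v' locally absolutely continuous on [0,1] \ {x₀}, √a v'' ∈ L²
    (hv : ACOn 0 1 v v') (hv'' : LocACOn x₀ v' v'')
    (hsav : MeasureTheory.IntegrableOn (fun x => a x * (v'' x) ^ 2) (Set.Ioo 0 1)) :
    ∫ x in Set.Ioo (0:ℝ) 1, w₂ x * v x =
      w₁ 1 * v 1 - w₁ 0 * v 0 - a 1 * u'' 1 * v' 1 + a 0 * u'' 0 * v' 0 +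
        ∫ x in Set.Ioo (0:ℝ) 1, a x * u'' x * v'' x := by
  obtain ⟨-, -, hax₀, hapos, -⟩ := ha
  have ha_nonneg : ∀ᵐ x ∂volume.restrict (Ioo 0 1), 0 ≤ a x := by
    refine ae_restrict_of_forall_mem measurableSet_Ioo fun x hx => ?_
    rcases eq_or_ne x x₀ with rfl | hne
    exacts [hax₀.ge, (hapos x (Ioo_subset_Icc_self hx) hne).le]
  have hauv_meas :
      AEStronglyMeasurable (fun x => a x * u'' x * v'' x) (volume.restrict (Ioo 0 1)) :=
    ((hau''.continuousOn.mono Ioo_subset_Icc_self).aestronglyMeasurable measurableSet_Ioo).mul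
      hv''.aestronglyMeasurable
  have hauv : IntegrableOn (fun x => a x * u'' x * v'' x) (Icc 0 1) :=
    (integrableOn_Icc_iff_integrableOn_Ioo).2 <|
      integrable_mul_mul_of_integrable_mul_sq ha_nonneg hsau hsav hauv_meas
  have hIBP₁ := hw₁.integral_mul_deriv_eq_deriv_mul zero_le_one hv
  have hIBP₂ := hv''.integral_mul_deriv_eq_deriv_mul hx₀ hau'' hw₁.continuousOn
    (by simp [hax₀]) hv.1 hauv
  simp only [intervalIntegral.integral_of_le zero_le_one, integral_Ioc_eq_integral_Ioo]
    at hIBP₁ hIBP₂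
  linarith

/-- Green's formula for the operator in divergence form in the strongly
degenerate case with interior degeneracy point `x₀ ∈ (0,1)`.
Here `w₁ = (a u'')'` and `w₂ = (a u'')''`. -/
theorem statement10 (a : ℝ → ℝ) (x₀ : ℝ) (hx₀ : x₀ ∈ Set.Ioo (0:ℝ) 1)
    (ha : StronglyDeg a x₀)
    (u u' u'' w₁ w₂ v v' v'' : ℝ → ℝ)
    -- u ∈ H¹, u' locally absolutely continuous on [0,1] \ {x₀}, √a u'' ∈ L², a u'' ∈ H²
    (hu : ACOn 0 1 u u') (hu'' : LocACOn x₀ u' u'')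
    (hsau : MeasureTheory.IntegrableOn (fun x => a x * (u'' x) ^ 2) (Set.Ioo 0 1))
    (hau'' : ACOn 0 1 (fun x => a x * u'' x) w₁) (hw₁ : ACOn 0 1 w₁ w₂)
    (hw₂ : MeasureTheory.IntegrableOn (fun x => (w₂ x) ^ 2) (Set.Ioo 0 1))
    -- v ∈ H¹, v' locally absolutely continuous on [0,1] \ {x₀}, √a v'' ∈ L²
    (hv : ACOn 0 1 v v') (hv'' : LocACOn x₀ v' v'')
    (hsav : MeasureTheory.IntegrableOn (fun x => a x * (v'' x) ^ 2) (Set.Ioo 0 1)) :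
    ∫ x in Set.Ioo (0:ℝ) 1, w₂ x * v x =
      w₁ 1 * v 1 - w₁ 0 * v 0 - a 1 * u'' 1 * v' 1 + a 0 * u'' 0 * v' 0 +
        ∫ x in Set.Ioo (0:ℝ) 1, a x * u'' x * v'' x :=
  statement10_general a x₀ hx₀ ha u'' w₁ w₂ v v' v'' hsau hau'' hw₁ hv hv'' hsav
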